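/- Let A ∈ ℝ^{m×m}, B ∈ ℝ^{m×1}, C ∈ ℝ^{1×m}, and let α < β be real scalars, ε > 0, M > 0. Suppose the matrices (P, L, J), with P symmetric positive definite, L ∈ ℝ^{p×m}, J ∈ ℝ^p, satisfy the ε-KYP conditions for the shifted realization (A − αBC, B, C, 1/(β−α)): P(A − αBC) + (A − αBC)ᵀP = −LᵀL − (ε/2)P, PB = Cᵀ − LᵀJ, JᵀJ = 2/(β−α). Let n : ℝ × ℝ → ℝ be continuous and satisfy the hyperbolic sector condition (1/(β−α))·(n(t,y) − αy)·(βy − n(t,y)) > −M for all t and y. Let x : [0, ∞) → ℝ^m be differentiable with x'(t) = A x(t) − B n(t, C x(t)) for all t ≥ 0. Then for every η > 0 there exists t_η ≥ 0 such that (1/2) x(t)ᵀ P x(t) ≤ 2M/ε + η for all t ≥ t_η. -/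

import Mathlib

open Matrix Filter Topology

/-!
`V(x) = ½ xᵀPx` is a Lyapunov function. After the loop transformation `n̂ = n - αy`,
`ŷ = y - n̂/(β-α)`, the KYP conditions make the linear block strictly dissipative with supply
rate `n̂ ŷ`: completing the square in `Lx - n̂J` gives `V' ≤ -(ε/2)V - n̂ŷ`. The hyperbolic sector
condition says `-n̂ŷ < M`, so `V' ≤ -(ε/2)V + M`, and Grönwall's inequality gives
`V(t) ≤ 2M/ε + (V(0) - 2M/ε) e^{-εt/2}`.
-/

theorem Matrix.IsSymm.dotProduct_mulVec_comm {R ι : Type*} [CommSemiring R] [Fintype ι]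
    {P : Matrix ι ι R} (hP : P.IsSymm) (v w : ι → R) : v ⬝ᵥ P *ᵥ w = w ⬝ᵥ P *ᵥ v := by
  rw [dotProduct_mulVec, ← mulVec_transpose, hP.eq, dotProduct_comm]

section KYP

variable {R : Type*} [Field R] [LinearOrder R] [IsStrictOrderedRing R]
  {ι κ : Type*} [Fintype ι] [Fintype κ] {P Â : Matrix ι ι R} {B C : ι → R}
  {L : Matrix κ ι R} {J : κ → R} {D ε : R}

theorem kyp_dissipation_eq (hP : P.IsSymm)
    (hKYP1 : P * Â + Âᵀ * P = -(Lᵀ * L) - (ε / 2) • P) (hKYP2 : P *ᵥ B = C - Lᵀ *ᵥ J)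
    (hKYP3 : J ⬝ᵥ J = 2 * D) (v : ι → R) (u : R) :
    (Â *ᵥ v - u • B) ⬝ᵥ P *ᵥ v =
      -(1 / 2) * ((L *ᵥ v - u • J) ⬝ᵥ (L *ᵥ v - u • J)) - ε / 4 * (v ⬝ᵥ P *ᵥ v)
        - u * (C ⬝ᵥ v - D * u) := by
  have hquad : 2 * (Â *ᵥ v ⬝ᵥ P *ᵥ v) = -(L *ᵥ v ⬝ᵥ L *ᵥ v) - ε / 2 * (v ⬝ᵥ P *ᵥ v) := by
    have h := congrArg (fun Q => v ⬝ᵥ Q *ᵥ v) hKYP1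
    simp only [add_mulVec, sub_mulVec, neg_mulVec, smul_mulVec, ← mulVec_mulVec,
      dotProduct_add, dotProduct_sub, dotProduct_neg, dotProduct_smul, smul_eq_mul] at h
    rw [hP.dotProduct_mulVec_comm, dotProduct_mulVec v Âᵀ, vecMul_transpose,
      dotProduct_mulVec v Lᵀ, vecMul_transpose] at h
    linear_combination h
  have hinput : B ⬝ᵥ P *ᵥ v = C ⬝ᵥ v - L *ᵥ v ⬝ᵥ J := by
    rw [hP.dotProduct_mulVec_comm, hKYP2, dotProduct_sub, dotProduct_mulVec, vecMul_transpose,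
      dotProduct_comm v]
  simp only [sub_dotProduct, dotProduct_sub, smul_dotProduct, dotProduct_smul, smul_eq_mul,
    hinput, hKYP3, dotProduct_comm J]
  linear_combination hquad / 2

theorem kyp_dissipation_le (hP : P.IsSymm)
    (hKYP1 : P * Â + Âᵀ * P = -(Lᵀ * L) - (ε / 2) • P) (hKYP2 : P *ᵥ B = C - Lᵀ *ᵥ J)
    (hKYP3 : J ⬝ᵥ J = 2 * D) (v : ι → R) (u : R) :
    (Â *ᵥ v - u • B) ⬝ᵥ P *ᵥ v ≤ -(ε / 4) * (v ⬝ᵥ P *ᵥ v) - u * (C ⬝ᵥ v - D * u) := by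
  have hsq : 0 ≤ (L *ᵥ v - u • J) ⬝ᵥ (L *ᵥ v - u • J) :=
    Fintype.sum_nonneg fun _ => mul_self_nonneg _
  rw [kyp_dissipation_eq hP hKYP1 hKYP2 hKYP3]
  linarith

end KYP

/-- The α-pole shift leaves the Lur'e vector field unchanged once the input is shifted by
`α (C ⬝ᵥ v)`. -/
theorem sub_smul_vecMulVec_mulVec {R ι : Type*} [CommRing R] [Fintype ι]
    (A : Matrix ι ι R) (B C v : ι → R) (α u : R) :
    (A - α • vecMulVec B C) *ᵥ v - (u - α * (C ⬝ᵥ v)) • B = A *ᵥ v - u • B := by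
  rw [sub_mulVec, smul_mulVec, vecMulVec_mulVec]
  ext i
  simp only [Pi.sub_apply, Pi.smul_apply, smul_eq_mul, op_smul_eq_smul]
  ring

section Calculus

variable {𝕜 : Type*} [NontriviallyNormedField 𝕜] {ι κ : Type*} [Fintype ι]
  {u v : 𝕜 → ι → 𝕜} {u' v' : ι → 𝕜} {t : 𝕜}

theorem HasDerivAt.dotProduct (hu : HasDerivAt u u' t) (hv : HasDerivAt v v' t) :
    HasDerivAt (fun s => u s ⬝ᵥ v s) (u' ⬝ᵥ v t + u t ⬝ᵥ v') t := by
  simp only [_root_.dotProduct, ← Finset.sum_add_distrib]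
  exact HasDerivAt.fun_sum fun i _ =>
    (hasDerivAt_pi.1 hu i).mul (hasDerivAt_pi.1 hv i)

theorem HasDerivAt.matrix_mulVec (P : Matrix κ ι 𝕜) (hu : HasDerivAt u u' t) :
    HasDerivAt (fun s => P *ᵥ u s) (P *ᵥ u') t :=
  hasDerivAt_pi.2 fun i => by
    simpa [Matrix.mulVec] using (hasDerivAt_const t (P i)).dotProduct hu

theorem HasDerivAt.dotProduct_mulVec_self {P : Matrix ι ι 𝕜} (hP : P.IsSymm)
    (hu : HasDerivAt u u' t) :
    HasDerivAt (fun s => u s ⬝ᵥ P *ᵥ u s) (2 * (u' ⬝ᵥ P *ᵥ u t)) t := by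
  convert hu.dotProduct (hu.matrix_mulVec P) using 1
  rw [hP.dotProduct_mulVec_comm (u t), two_mul]

end Calculus

section Gronwall

theorem le_gronwallBound_of_hasDerivAt {f f' : ℝ → ℝ} {K ε a : ℝ}
    (hf : ∀ t, a ≤ t → HasDerivAt f (f' t) t) (bound : ∀ t, a ≤ t → f' t ≤ K * f t + ε)
    {t : ℝ} (ht : a ≤ t) : f t ≤ gronwallBound (f a) K ε (t - a) :=
  le_gronwallBound_of_liminf_deriv_right_le
    (fun s hs => (hf s hs.1).continuousAt.continuousWithinAt)
    (fun s hs _ hr => (hf s hs.1).hasDerivWithinAt.liminf_right_slope_le hr) le_rfl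
    (fun s hs => bound s hs.1) t ⟨ht, le_rfl⟩

theorem tendsto_gronwallBound_atTop {δ K ε : ℝ} (hK : K < 0) :
    Tendsto (gronwallBound δ K ε) atTop (𝓝 (-ε / K)) := by
  have hexp : Tendsto (fun x => Real.exp (K * x)) atTop (𝓝 0) :=
    Real.tendsto_exp_atBot.comp (tendsto_id.const_mul_atTop_of_neg hK)
  rw [gronwallBound_of_K_ne_0 hK.ne]
  convert (hexp.const_mul δ).add ((hexp.sub_const 1).const_mul (ε / K)) using 2
  ring

theorem eventually_le_of_hasDerivAt_le_neg_mul_add {f f' : ℝ → ℝ} {k M η a : ℝ}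
    (hk : 0 < k) (hη : 0 < η) (hf : ∀ t, a ≤ t → HasDerivAt f (f' t) t)
    (bound : ∀ t, a ≤ t → f' t ≤ -k * f t + M) :
    ∀ᶠ t in atTop, f t ≤ M / k + η := by
  have hlim : Tendsto (fun t => gronwallBound (f a) (-k) M (t - a)) atTop (𝓝 (M / k)) := by
    rw [show M / k = -M / -k by ring]
    exact (tendsto_gronwallBound_atTop (neg_neg_of_pos hk)).comp
      (tendsto_atTop_add_const_right _ _ tendsto_id)
  filter_upwards [eventually_ge_atTop a,
    hlim.eventually (eventually_le_nhds (lt_add_of_pos_right _ hη))] with t hat hgt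
  exact (le_gronwallBound_of_hasDerivAt hf bound hat).trans hgt

end Gronwall

theorem weak_circle_criterion_general {m p : ℕ}
    (A : Matrix (Fin m) (Fin m) ℝ) (B : Fin m → ℝ) (C : Fin m → ℝ)
    (α β ε M : ℝ) (hαβ : α < β) (hε : 0 < ε)
    (P : Matrix (Fin m) (Fin m) ℝ) (hP : P.PosDef)
    (L : Matrix (Fin p) (Fin m) ℝ) (J : Fin p → ℝ)
    (hKYP1 : P * (A - α • vecMulVec B C) + (A - α • vecMulVec B C)ᵀ * P
                = -(Lᵀ * L) - (ε / 2) • P)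
    (hKYP2 : P.mulVec B = C - Lᵀ.mulVec J)
    (hKYP3 : J ⬝ᵥ J = 2 / (β - α))
    (n : ℝ → ℝ → ℝ)
    (hsector : ∀ t y, -M < (1 / (β - α)) * (n t y - α * y) * (β * y - n t y))
    (x : ℝ → Fin m → ℝ)
    (hx : ∀ t, 0 ≤ t → HasDerivAt x (A.mulVec (x t) - n t (C ⬝ᵥ x t) • B) t) :
    ∀ η > (0 : ℝ), ∃ tη, 0 ≤ tη ∧
      ∀ t, tη ≤ t → (1 / 2) * (x t ⬝ᵥ P.mulVec (x t)) ≤ 2 * M / ε + η := by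
  intro η hη
  have hPs : P.IsSymm := isHermitian_iff_isSymm.1 hP.isHermitian
  have hdiss : ∀ t, 0 ≤ t → (A *ᵥ x t - n t (C ⬝ᵥ x t) • B) ⬝ᵥ P *ᵥ x t
      ≤ -(ε / 2) * ((1 / 2) * (x t ⬝ᵥ P *ᵥ x t)) + M := by
    intro t _
    set y := C ⬝ᵥ x t
    have hsupply := kyp_dissipation_le hPs hKYP1 hKYP2 (D := 1 / (β - α))
      (by rw [hKYP3]; ring) (x t) (n t y - α * y)
    rw [sub_smul_vecMulVec_mulVec] at hsupply
    have hsector_eq : (1 / (β - α)) * (n t y - α * y) * (β * y - n t y)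
        = (n t y - α * y) * (y - 1 / (β - α) * (n t y - α * y)) := by
      field_simp [(sub_pos.2 hαβ).ne']
      ring
    linarith [hsector t y]
  have hV : ∀ t, 0 ≤ t → HasDerivAt (fun s => (1 / 2) * (x s ⬝ᵥ P *ᵥ x s))
      ((A *ᵥ x t - n t (C ⬝ᵥ x t) • B) ⬝ᵥ P *ᵥ x t) t := fun t ht => by
    simpa using ((hx t ht).dotProduct_mulVec_self hPs).const_mul (1 / 2 : ℝ)
  obtain ⟨tη, htη⟩ := eventually_atTop.1
    ((eventually_le_of_hasDerivAt_le_neg_mul_add (half_pos hε) hη hV hdiss).and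
      (eventually_ge_atTop 0))
  refine ⟨tη, (htη tη le_rfl).2, fun t ht => ?_⟩
  convert (htη t ht).1 using 2
  field_simp

/-- Theorem 1 (Weak Circle Criterion), state-space form for a strictly proper
linear block: if `(P, L, J)` satisfy the ε-KYP conditions for the shifted
realization `(A - αBC, B, C, 1/(β-α))` and the nonlinearity satisfies the
hyperbolic sector condition
`(1/(β-α))·(n(t,y) - αy)·(βy - n(t,y)) > -M`, then for every `η > 0` the state
of the Lur'e system `x' = A x - B n(t, Cx)` reaches the region
`{x : (1/2) xᵀPx ≤ 2M/ε + η}` in finite time without leaving it anymore. -/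
theorem weak_circle_criterion {m p : ℕ}
    (A : Matrix (Fin m) (Fin m) ℝ) (B : Fin m → ℝ) (C : Fin m → ℝ)
    (α β ε M : ℝ) (hαβ : α < β) (hε : 0 < ε) (hM : 0 < M)
    (P : Matrix (Fin m) (Fin m) ℝ) (hP : P.PosDef)
    (L : Matrix (Fin p) (Fin m) ℝ) (J : Fin p → ℝ)
    (hKYP1 : P * (A - α • vecMulVec B C) + (A - α • vecMulVec B C)ᵀ * P
                = -(Lᵀ * L) - (ε / 2) • P)
    (hKYP2 : P.mulVec B = C - Lᵀ.mulVec J)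
    (hKYP3 : J ⬝ᵥ J = 2 / (β - α))
    (n : ℝ → ℝ → ℝ) (hn : Continuous fun q : ℝ × ℝ => n q.1 q.2)
    (hsector : ∀ t y, -M < (1 / (β - α)) * (n t y - α * y) * (β * y - n t y))
    (x : ℝ → Fin m → ℝ)
    (hx : ∀ t, 0 ≤ t → HasDerivAt x (A.mulVec (x t) - n t (C ⬝ᵥ x t) • B) t) :
    ∀ η > (0 : ℝ), ∃ tη, 0 ≤ tη ∧
      ∀ t, tη ≤ t → (1 / 2) * (x t ⬝ᵥ P.mulVec (x t)) ≤ 2 * M / ε + η :=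
  weak_circle_criterion_general A B C α β ε M hαβ hε P hP L J hKYP1 hKYP2 hKYP3 n hsector x hx
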